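/- Let Γ be a finite abelian group and let σ ∈ Γ be an element of order 2. Then there exist a positive integer d and an injective group homomorphism ρ from Γ into the group of linear isometries of ℝ^d such that ρ(σ) = -id. -/

import Mathlib

open Complex

section Aux

variable {Γ : Type} [CommGroup Γ] [Finite Γ]

private lemma char_norm_one (χ : Γ →* ℂˣ) (g : Γ) : ‖(χ g : ℂ)‖ = 1 := by
  have : Fintype Γ := Fintype.ofFinite Γ
  have h : ((χ g : ℂ)) ^ Fintype.card Γ = 1 := by
    have : (χ g) ^ Fintype.card Γ = 1 := by rw [← map_pow, pow_card_eq_one, map_one]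
    simpa using congrArg Units.val this
  exact Complex.norm_eq_one_of_pow_eq_one h Fintype.card_ne_zero

/-- A character into `ℂˣ` of a finite group, viewed as a character into `Circle`. -/
private def charToCircle (χ : Γ →* ℂˣ) : Γ →* Circle where
  toFun g := ⟨(χ g : ℂ), mem_sphere_zero_iff_norm.2 (char_norm_one χ g)⟩
  map_one' := by ext; simp
  map_mul' g h := by ext; simp; rfl

private lemma charToCircle_coe (χ : Γ →* ℂˣ) (g : Γ) :
    ((charToCircle χ g : Circle) : ℂ) = (χ g : ℂ) := rfl

end Aux

/-- Let `Γ` be a finite abelian group and `σ ∈ Γ` of order 2.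
Then there exist a positive integer `d` and an injective group homomorphism `ρ`
from `Γ` into the orthogonal group of `ℝ^d` (the group of linear isometries)
such that `ρ σ = -id`. -/
theorem abelian_group_in_orthogonal_group_with_central_involution
    (Γ : Type) [CommGroup Γ] [Finite Γ] (σ : Γ) (hσ : orderOf σ = 2) :
    ∃ d : ℕ, 0 < d ∧
      ∃ ρ : Γ →* (EuclideanSpace ℝ (Fin d) ≃ₗᵢ[ℝ] EuclideanSpace ℝ (Fin d)),
        Function.Injective ρ ∧
        ∀ x : EuclideanSpace ℝ (Fin d), ρ σ x = -x := by
  classical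
  have : Fintype Γ := Fintype.ofFinite Γ
  have hσ1 : σ ≠ 1 := by
    intro h
    rw [h, orderOf_one] at hσ
    omega
  have hσ2 : σ * σ = 1 := by
    have := pow_orderOf_eq_one σ
    rwa [hσ, sq] at this
  have hexp : NeZero ((Monoid.exponent Γ : ℂ)) :=
    ⟨Nat.cast_ne_zero.mpr (Monoid.exponent_ne_zero_of_finite)⟩
  -- square roots of 1 in ℂˣ
  have sq_cases : ∀ x : ℂˣ, x * x = 1 → x = 1 ∨ x = -1 := by
    intro x hx
    have hx' : (x : ℂ) * x = 1 := by simpa using congrArg Units.val hx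
    rcases mul_self_eq_one_iff.mp hx' with h | h
    · exact Or.inl (Units.ext (by simpa using h))
    · exact Or.inr (Units.ext (by simpa using h))
  -- a character sending σ to -1
  obtain ⟨χ₀, hχ₀⟩ := CommGroup.exists_apply_ne_one_of_hasEnoughRootsOfUnity Γ ℂ hσ1
  have hχ₀σ : χ₀ σ = -1 := by
    rcases sq_cases (χ₀ σ) (by rw [← map_mul, hσ2, map_one]) with h | h
    · exact absurd h hχ₀
    · exact h
  -- separating characters
  choose χfun hχfun using fun y : {y : Γ // y ≠ 1} =>
    CommGroup.exists_apply_ne_one_of_hasEnoughRootsOfUnity Γ ℂ y.2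
  set c : Γ → (Γ →* ℂˣ) := fun y => if h : y = 1 then 1 else χfun ⟨y, h⟩ with hc
  set η : Γ → (Γ →* ℂˣ) := fun y => if (c y) σ = -1 then c y else χ₀ * c y with hη
  have hcσ : ∀ y, c y σ = 1 ∨ c y σ = -1 := fun y =>
    sq_cases _ (by rw [← map_mul, hσ2, map_one])
  have hησ : ∀ y, η y σ = -1 := by
    intro y
    simp only [hη]
    split
    · assumption
    · rcases hcσ y with h | h
      · simp [MonoidHom.mul_apply, h, hχ₀σ]
      · tauto
  have hη1 : η 1 = χ₀ := by
    have hc1 : c 1 = 1 := by simp [hc]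
    have h1 : (1 : ℂˣ) ≠ -1 := by
      intro h
      have := congrArg Units.val h
      norm_num at this
    simp only [hη, hc1]
    rw [if_neg (fun h => h1 ((MonoidHom.one_apply σ).symm.trans h))]
    simp
  have hsep : ∀ g : Γ, (∀ y, η y g = 1) → g = 1 := by
    intro g hg
    by_contra hg1
    have hχ₀g : χ₀ g = 1 := by
      have := hg 1
      rwa [hη1] at this
    have hcgg : c g g ≠ 1 := by
      simp only [hc, dif_neg hg1]
      exact hχfun ⟨g, hg1⟩
    have := hg g
    simp only [hη] at this
    split at this
    · exact hcgg this
    · rw [MonoidHom.mul_apply, hχ₀g, one_mul] at this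
      exact hcgg this
  -- the representation space
  set E := PiLp 2 (fun _ : Γ => ℂ) with hE
  haveI : Nontrivial E := inferInstanceAs (Nontrivial (PiLp 2 (fun _ : Γ => ℂ)))
  set ψ := (stdOrthonormalBasis ℝ E).repr with hψ
  set d := Module.finrank ℝ E with hd
  refine ⟨d, Module.finrank_pos, ?_⟩
  set A : Γ → (E ≃ₗᵢ[ℝ] E) := fun g =>
    LinearIsometryEquiv.piLpCongrRight 2 (fun y => rotation (charToCircle (η y) g)) with hA
  have hAapp : ∀ g (v : E) (y : Γ), (A g v) y = (η y g : ℂ) * v y := by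
    intro g v y
    exact rotation_apply _ _
  refine ⟨{ toFun := fun g => (ψ.symm.trans (A g)).trans ψ
            map_one' := ?_
            map_mul' := ?_ }, ?_, ?_⟩
  · ext x
    have : A 1 (ψ.symm x) = ψ.symm x := by
      refine PiLp.ext (fun y => ?_)
      rw [hAapp]
      simp
    simp [this]
  · intro g h
    ext x
    have : A (g * h) (ψ.symm x) = A g (A h (ψ.symm x)) := by
      refine PiLp.ext (fun y => ?_)
      rw [hAapp, hAapp, hAapp, map_mul]
      push_cast
      ring
    simp [this]
  · rw [injective_iff_map_eq_one]
    intro g hg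
    apply hsep
    intro y
    have hv : ∀ v : E, A g v = v := by
      intro v
      simpa using congrArg
        (fun (e : EuclideanSpace ℝ (Fin d) ≃ₗᵢ[ℝ] EuclideanSpace ℝ (Fin d)) => e (ψ v)) hg
    set v1 : E := WithLp.toLp 2 (fun _ => 1 : ∀ _ : Γ, ℂ) with hv1
    apply Units.ext
    calc (η y g : ℂ) = (η y g : ℂ) * v1 y := by rw [mul_one]
      _ = (A g v1) y := (hAapp g v1 y).symm
      _ = v1 y := by rw [hv v1]
      _ = 1 := rfl
  · intro x
    have : A σ (ψ.symm x) = -(ψ.symm x) := by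
      refine PiLp.ext (fun y => ?_)
      rw [hAapp, hησ]
      simp
      rfl
    simp [this]
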